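/- arXiv:2112.11062 — 8 statements merged into one kernel-verified Lean document; each statement's English description precedes it below -/
import Mathlib

section
/- The partial merge operation ‡ on sorted lists of natural numbers is associative: for all sorted lists ℓ₁, ℓ₂, ℓ₃, if both sides are defined then ℓ₁ ‡ (ℓ₂ ‡ ℓ₃) = (ℓ₁ ‡ ℓ₂) ‡ ℓ₃. -/
/-- Partial merge of lists of naturals, failing on equal heads. -/
def merge : List ℕ → List ℕ → Option (List ℕ)
  | [], l => some l
  | i :: l, [] => some (i :: l)
  | i₁ :: l₁, i₂ :: l₂ =>
    if i₁ < i₂ then (merge l₁ (i₂ :: l₂)).map (i₁ :: ·)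
    else if i₂ < i₁ then (merge (i₁ :: l₁) l₂).map (i₂ :: ·)
    else none
termination_by l₁ l₂ => l₁.length + l₂.length

theorem merge_nil_right (l : List ℕ) : merge l [] = some l := by
  cases l <;> simp [merge]

theorem merge_assoc_aux (n : ℕ) : ∀ l1 l2 l3 m23 m12 a b : List ℕ,
    l1.length + l2.length + l3.length ≤ n →
    merge l2 l3 = some m23 → merge l1 m23 = some a →
    merge l1 l2 = some m12 → merge m12 l3 = some b → a = b := by
  induction n with
  | zero =>
    intro l1 l2 l3 m23 m12 a b hn h23 ha h12 hb
    have e1 : l1 = [] := List.length_eq_zero_iff.mp (by omega)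
    have e2 : l2 = [] := List.length_eq_zero_iff.mp (by omega)
    have e3 : l3 = [] := List.length_eq_zero_iff.mp (by omega)
    subst e1 e2 e3
    rw [merge_nil_right] at hb
    simp [merge] at h23 ha h12
    simp_all
  | succ n ih =>
    intro l1 l2 l3 m23 m12 a b hn h23 ha h12 hb
    match l1, l2, l3 with
    | [], l2, l3 =>
      simp [merge] at ha h12
      subst ha h12
      rw [h23] at hb
      simp_all
    | i :: t1, [], l3 =>
      simp [merge] at h23 h12
      subst h23 h12
      rw [ha] at hb; exact Option.some_inj.mp hb
    | i :: t1, j :: t2, [] =>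
      rw [merge_nil_right] at h23
      rw [merge_nil_right] at hb
      cases h23; cases hb
      rw [ha] at h12; exact Option.some_inj.mp h12
    | i :: t1, j :: t2, k :: t3 =>
      rcases lt_trichotomy j k with hjk | hjk | hjk
      · -- j < k
        rw [merge, if_pos hjk] at h23
        obtain ⟨m', hm', rfl⟩ := Option.map_eq_some_iff.mp h23
        rcases lt_trichotomy i j with hij | hij | hij
        · -- i < j < k
          rw [merge, if_pos hij] at ha h12
          obtain ⟨a', ha', rfl⟩ := Option.map_eq_some_iff.mp ha
          obtain ⟨m12', hm12', rfl⟩ := Option.map_eq_some_iff.mp h12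
          rw [merge, if_pos (hij.trans hjk)] at hb
          obtain ⟨b', hb', hb2⟩ := Option.map_eq_some_iff.mp hb
          have : a' = b' := by
            apply ih t1 (j :: t2) (k :: t3) (j :: m') m12' a' b' (by simp at hn ⊢; omega)
            · rw [merge, if_pos hjk, hm']; rfl
            · exact ha'
            · exact hm12'
            · exact hb'
          rw [this, hb2]
        · subst hij; rw [merge, if_neg (lt_irrefl i), if_neg (lt_irrefl i)] at h12
          exact absurd h12 (by simp)
        · -- j < i
          rw [merge, if_neg (by omega), if_pos hij] at ha h12
          obtain ⟨a', ha', rfl⟩ := Option.map_eq_some_iff.mp ha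
          obtain ⟨m12', hm12', rfl⟩ := Option.map_eq_some_iff.mp h12
          rw [merge, if_pos hjk] at hb
          obtain ⟨b', hb', hb2⟩ := Option.map_eq_some_iff.mp hb
          have : a' = b' := by
            apply ih (i :: t1) t2 (k :: t3) m' m12' a' b' (by simp at hn ⊢; omega)
            · exact hm'
            · exact ha'
            · exact hm12'
            · exact hb'
          rw [this, hb2]
      · subst hjk
        rw [merge, if_neg (lt_irrefl j), if_neg (lt_irrefl j)] at h23
        exact absurd h23 (by simp)
      · -- k < j
        rw [merge, if_neg (by omega), if_pos hjk] at h23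
        obtain ⟨m', hm', rfl⟩ := Option.map_eq_some_iff.mp h23
        rcases lt_trichotomy i k with hik | hik | hik
        · -- i < k < j
          rw [merge, if_pos hik] at ha
          obtain ⟨a', ha', rfl⟩ := Option.map_eq_some_iff.mp ha
          rw [merge, if_pos (hik.trans hjk)] at h12
          obtain ⟨m12', hm12', rfl⟩ := Option.map_eq_some_iff.mp h12
          rw [merge, if_pos hik] at hb
          obtain ⟨b', hb', hb2⟩ := Option.map_eq_some_iff.mp hb
          have : a' = b' := by
            apply ih t1 (j :: t2) (k :: t3) (k :: m') m12' a' b' (by simp at hn ⊢; omega)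
            · rw [merge, if_neg (by omega), if_pos hjk, hm']; rfl
            · exact ha'
            · exact hm12'
            · exact hb'
          rw [this, hb2]
        · subst hik
          rw [merge, if_neg (lt_irrefl i), if_neg (lt_irrefl i)] at ha
          exact absurd ha (by simp)
        · -- k < i
          rw [merge, if_neg (by omega), if_pos hik] at ha
          obtain ⟨a', ha', rfl⟩ := Option.map_eq_some_iff.mp ha
          rcases lt_trichotomy i j with hij | hij | hij
          · -- k < i < j
            rw [merge, if_pos hij] at h12
            obtain ⟨m12', hm12', rfl⟩ := Option.map_eq_some_iff.mp h12
            rw [merge, if_neg (by omega), if_pos hik] at hb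
            obtain ⟨b', hb', hb2⟩ := Option.map_eq_some_iff.mp hb
            have : a' = b' := by
              apply ih (i :: t1) (j :: t2) t3 m' (i :: m12') a' b' (by simp at hn ⊢; omega)
              · exact hm'
              · exact ha'
              · rw [merge, if_pos hij, hm12']; rfl
              · exact hb'
            rw [this, hb2]
          · subst hij
            rw [merge, if_neg (lt_irrefl i), if_neg (lt_irrefl i)] at h12
            exact absurd h12 (by simp)
          · -- k < j < i
            rw [merge, if_neg (by omega), if_pos hij] at h12
            obtain ⟨m12', hm12', rfl⟩ := Option.map_eq_some_iff.mp h12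
            rw [merge, if_neg (by omega), if_pos hjk] at hb
            obtain ⟨b', hb', hb2⟩ := Option.map_eq_some_iff.mp hb
            have : a' = b' := by
              apply ih (i :: t1) (j :: t2) t3 m' (j :: m12') a' b' (by simp at hn ⊢; omega)
              · exact hm'
              · exact ha'
              · rw [merge, if_neg (by omega), if_pos hij, hm12']; rfl
              · exact hb'
            rw [this, hb2]

theorem merge_assoc (ℓ₁ ℓ₂ ℓ₃ m₂₃ m₁₂ a b : List ℕ)
    (h₁ : ℓ₁.Pairwise (· < ·)) (h₂ : ℓ₂.Pairwise (· < ·)) (h₃ : ℓ₃.Pairwise (· < ·))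
    (h₂₃ : merge ℓ₂ ℓ₃ = some m₂₃) (ha : merge ℓ₁ m₂₃ = some a)
    (h₁₂ : merge ℓ₁ ℓ₂ = some m₁₂) (hb : merge m₁₂ ℓ₃ = some b) :
    a = b :=
  merge_assoc_aux (ℓ₁.length + ℓ₂.length + ℓ₃.length) ℓ₁ ℓ₂ ℓ₃ m₂₃ m₁₂ a b le_rfl h₂₃ ha h₁₂ hb
end

section
/- In the L-type system for terms with de Bruijn indices, any derivable L-type is strictly sorted: if t : ℓ is derivable, then ℓ is a strictly sorted list of naturals. -/
/-- λ-terms with de Bruijn indices. -/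
inductive Tm : Type
  | ind : ℕ → Tm
  | lam : Tm → Tm
  | app : Tm → Tm → Tm

/-- The L-type system. -/
inductive LTy : Tm → List ℕ → Prop
  | ind (i : ℕ) : LTy (.ind i) [i]
  | abs {t : Tm} {ℓ : List ℕ} :
      LTy t (0 :: ℓ) → (∀ x ∈ ℓ, 0 < x) → LTy (.lam t) (ℓ.map (· - 1))
  | app {t₁ t₂ : Tm} {ℓ₁ ℓ₂ ℓ : List ℕ} :
      LTy t₁ ℓ₁ → LTy t₂ ℓ₂ → merge ℓ₁ ℓ₂ = some ℓ → LTy (.app t₁ t₂) ℓ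

/-- The list of free de Bruijn indices of a term. -/
def FI : Tm → List ℕ
  | .ind n => [n]
  | .lam t => (FI t).filterMap (fun n => if n = 0 then none else some (n - 1))
  | .app t₁ t₂ => FI t₁ ++ FI t₂

lemma merge_mem : ∀ (l₁ l₂ l : List ℕ), merge l₁ l₂ = some l →
    ∀ x ∈ l, x ∈ l₁ ∨ x ∈ l₂
  | [], l₂, l, h => by simp [merge] at h; subst h; tauto
  | i :: l₁, [], l, h => by simp [merge] at h; subst h; tauto
  | i₁ :: l₁, i₂ :: l₂, l, h => by
    rw [merge] at h
    split_ifs at h with h1 h2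
    · obtain ⟨l', hl', rfl⟩ := Option.map_eq_some_iff.mp h
      intro x hx
      rcases List.mem_cons.mp hx with rfl | hx
      · simp
      · rcases merge_mem _ _ _ hl' x hx with h | h <;> simp [h]
    · obtain ⟨l', hl', rfl⟩ := Option.map_eq_some_iff.mp h
      intro x hx
      rcases List.mem_cons.mp hx with rfl | hx
      · simp
      · rcases merge_mem _ _ _ hl' x hx with h | h <;> simp [h]
  termination_by l₁ l₂ => l₁.length + l₂.length

lemma merge_sorted : ∀ (l₁ l₂ l : List ℕ), merge l₁ l₂ = some l →
    l₁.Pairwise (· < ·) → l₂.Pairwise (· < ·) → l.Pairwise (· < ·)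
  | [], l₂, l, h => by simp [merge] at h; subst h; exact fun _ h => h
  | i :: l₁, [], l, h => by simp [merge] at h; subst h; exact fun h _ => h
  | i₁ :: l₁, i₂ :: l₂, l, h => by
    rw [merge] at h
    split_ifs at h with h1 h2
    · obtain ⟨l', hl', rfl⟩ := Option.map_eq_some_iff.mp h
      intro hs1 hs2
      refine List.pairwise_cons.mpr ⟨?_, merge_sorted _ _ _ hl' hs1.tail hs2⟩
      intro x hx
      rcases merge_mem _ _ _ hl' x hx with hm | hm
      · exact List.pairwise_cons.mp hs1 |>.1 x hm
      · rcases List.mem_cons.mp hm with rfl | hm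
        · exact h1
        · exact h1.trans (List.pairwise_cons.mp hs2 |>.1 x hm)
    · obtain ⟨l', hl', rfl⟩ := Option.map_eq_some_iff.mp h
      intro hs1 hs2
      refine List.pairwise_cons.mpr ⟨?_, merge_sorted _ _ _ hl' hs1 hs2.tail⟩
      intro x hx
      rcases merge_mem _ _ _ hl' x hx with hm | hm
      · rcases List.mem_cons.mp hm with rfl | hm
        · exact h2
        · exact h2.trans (List.pairwise_cons.mp hs1 |>.1 x hm)
      · exact List.pairwise_cons.mp hs2 |>.1 x hm
  termination_by l₁ l₂ => l₁.length + l₂.length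

theorem LT_sorted {t : Tm} {ℓ : List ℕ} (h : LTy t ℓ) : ℓ.Pairwise (· < ·) := by
  induction h with
  | ind i => simp
  | abs h hpos ih =>
    have htail := (List.pairwise_cons.mp ih).2
    rw [List.pairwise_map]
    refine htail.imp_of_mem ?_
    intro a b ha hb hab
    have := hpos a ha
    omega
  | app h1 h2 hm ih1 ih2 => exact merge_sorted _ _ _ hm ih1 ih2
end

section
/- A term with de Bruijn indices has L-type [] if and only if it is closed and linear: t : [] is derivable iff every de Bruijn index occurring in t is bound, and each λ in t binds exactly one index occurrence. -/
/-- Each λ binds exactly one index occurrence. -/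
def Linear : Tm → Prop
  | .ind _ => True
  | .lam t => Linear t ∧ (FI t).count 0 = 1
  | .app t₁ t₂ => Linear t₁ ∧ Linear t₂

lemma merge_sound : ∀ l1 l2 l : List ℕ, merge l1 l2 = some l →
    (l : Multiset ℕ) = ↑l1 + ↑l2 := by
  intro l1 l2
  induction l1, l2 using merge.induct with
  | case1 l => intro l' h; simp [merge] at h; subst h; simp
  | case2 i l => intro l' h; simp [merge] at h; subst h; simp
  | case3 i1 l1 i2 l2 h ih =>
    intro l' h'
    rw [merge] at h'
    simp [h] at h'
    obtain ⟨l'', hl'', rfl⟩ := h'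
    have := ih l'' hl''
    simp [← Multiset.cons_coe, Multiset.cons_add, Multiset.cons_swap, this]
  | case4 i1 l1 i2 l2 h1 h2 ih =>
    intro l' h'
    rw [merge] at h'
    simp [h1, h2] at h'
    obtain ⟨l'', hl'', rfl⟩ := h'
    have := ih l'' hl''
    simp [← Multiset.cons_coe, Multiset.cons_add, Multiset.cons_swap, this]
  | case5 i1 l1 i2 l2 h1 h2 =>
    intro l' h'
    rw [merge] at h'
    simp [h1, h2] at h'

lemma merge_complete : ∀ l1 l2 : List ℕ, l1.Pairwise (·<·) → l2.Pairwise (·<·) →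
    (∀ a ∈ l1, a ∉ l2) →
    ∃ l, merge l1 l2 = some l ∧ l.Pairwise (·<·) ∧ (l : Multiset ℕ) = ↑l1 + ↑l2 := by
  intro l1 l2
  induction l1, l2 using merge.induct with
  | case1 l => intro _ h _; exact ⟨l, by simp [merge], h, by simp⟩
  | case2 i l => intro h _ _; exact ⟨i :: l, by simp [merge], h, by simp⟩
  | case3 i1 l1 i2 l2 h ih =>
    intro hs1 hs2 hdisj
    rw [List.pairwise_cons] at hs1
    obtain ⟨l, hm, hs, hmul⟩ := ih hs1.2 hs2 (fun a ha => hdisj a (by simp [ha]))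
    refine ⟨i1 :: l, by simp [merge, h, hm], ?_, ?_⟩
    · rw [List.pairwise_cons]
      refine ⟨?_, hs⟩
      intro b hb
      have : b ∈ (l : Multiset ℕ) := by simpa using hb
      rw [hmul] at this
      simp at this
      rcases this with hb1 | rfl | hb2
      · exact hs1.1 b hb1
      · exact h
      · rw [List.pairwise_cons] at hs2
        exact h.trans (hs2.1 b hb2)
    · simp [← Multiset.cons_coe, Multiset.cons_add, Multiset.cons_swap, hmul]
  | case4 i1 l1 i2 l2 h1 h2 ih =>
    intro hs1 hs2 hdisj
    rw [List.pairwise_cons] at hs2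
    obtain ⟨l, hm, hs, hmul⟩ := ih hs1 hs2.2 (fun a ha hb => hdisj a ha (by simp [hb]))
    refine ⟨i2 :: l, by simp [merge, h1, h2, hm], ?_, ?_⟩
    · rw [List.pairwise_cons]
      refine ⟨?_, hs⟩
      intro b hb
      have : b ∈ (l : Multiset ℕ) := by simpa using hb
      rw [hmul] at this
      simp at this
      rcases this with rfl | hb1 | hb2
      · exact h2
      · rw [List.pairwise_cons] at hs1
        exact h2.trans (hs1.1 b hb1)
      · exact hs2.1 b hb2
    · simp [← Multiset.cons_coe, Multiset.cons_add, Multiset.cons_swap, hmul]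
  | case5 i1 l1 i2 l2 h1 h2 =>
    intro _ _ hdisj
    exfalso
    have : i1 = i2 := by omega
    exact hdisj i1 (by simp) (by simp [this])

lemma count_filterMap (l : List ℕ) (k : ℕ) :
    (l.filterMap (fun n => if n = 0 then none else some (n - 1))).count k = l.count (k + 1) := by
  induction l with
  | nil => simp
  | cons a l ih =>
    rcases Nat.eq_zero_or_pos a with h | h
    · subst h; simp [List.count_cons, ih]
    · have ha : a ≠ 0 := by omega
      simp only [List.filterMap_cons, ha, if_false, List.count_cons, ih]
      by_cases hk : a = k + 1
      · simp [hk]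
      · have : ¬ (a - 1 = k) := by omega
        simp [hk, this]

lemma filterMap_eq_map_of_pos (ℓ : List ℕ) (h : ∀ x ∈ ℓ, 0 < x) :
    ℓ.filterMap (fun n => if n = 0 then none else some (n - 1)) = ℓ.map (· - 1) := by
  induction ℓ with
  | nil => rfl
  | cons a l ih =>
    have ha : a ≠ 0 := by have := h a (by simp); omega
    simp [List.filterMap_cons, ha, ih (fun x hx => h x (by simp [hx]))]

lemma LTy_spec {t : Tm} {ℓ : List ℕ} (h : LTy t ℓ) :
    Linear t ∧ (↑(FI t) : Multiset ℕ) = ↑ℓ := by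
  induction h with
  | ind i => exact ⟨trivial, rfl⟩
  | abs h hpos ih =>
    rename_i t ℓ
    obtain ⟨hlin, hm⟩ := ih
    have hcnt : ∀ k, (FI t).count k = (0 :: ℓ).count k := by
      intro k
      have := congrArg (Multiset.count k) hm
      simpa using this
    have h0 : (FI t).count 0 = 1 := by
      rw [hcnt 0]
      have : ℓ.count 0 = 0 := by
        rw [List.count_eq_zero]
        intro h0
        exact absurd (hpos 0 h0) (by simp)
      simp [List.count_cons, this]
    refine ⟨⟨hlin, h0⟩, ?_⟩
    have : FI (Tm.lam t) = (FI t).filterMap (fun n => if n = 0 then none else some (n - 1)) := rfl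
    rw [Multiset.coe_eq_coe]
    apply List.perm_iff_count.2
    intro k
    rw [this, count_filterMap]
    rw [← filterMap_eq_map_of_pos ℓ hpos, count_filterMap, hcnt (k + 1)]
    simp [List.count_cons]
  | app h1 h2 hm ih1 ih2 =>
    rename_i t1 t2 l1 l2 l
    refine ⟨⟨ih1.1, ih2.1⟩, ?_⟩
    have : FI (Tm.app t1 t2) = FI t1 ++ FI t2 := rfl
    rw [this, merge_sound _ _ _ hm, ← ih1.2, ← ih2.2]
    simp

lemma LTy_of_linear : ∀ t : Tm, Linear t → (FI t).Nodup →
    ∃ ℓ, LTy t ℓ ∧ ℓ.Pairwise (·<·) ∧ (↑ℓ : Multiset ℕ) = ↑(FI t) := by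
  intro t
  induction t with
  | ind n => intro _ _; exact ⟨[n], LTy.ind n, by simp, rfl⟩
  | lam t ih =>
    rintro ⟨hlin, hcount⟩ hnd
    have hFIlam : FI (Tm.lam t) =
        (FI t).filterMap (fun n => if n = 0 then none else some (n - 1)) := rfl
    have hnd' : (FI t).Nodup := by
      rw [List.nodup_iff_count_le_one] at *
      intro a
      rcases a with _ | k
      · omega
      · have := hnd k
        rw [hFIlam, count_filterMap] at this
        exact this
    obtain ⟨ℓ, hty, hsort, hm⟩ := ih hlin hnd'
    have hcnt : ∀ k, ℓ.count k = (FI t).count k := by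
      intro k
      have := congrArg (Multiset.count k) hm
      simpa using this
    have h0mem : 0 ∈ ℓ := by
      rw [← List.count_pos_iff, hcnt 0, hcount]; omega
    obtain ⟨a, ℓ', rfl⟩ : ∃ a ℓ', ℓ = a :: ℓ' := by
      cases ℓ with
      | nil => simp at h0mem
      | cons a ℓ' => exact ⟨a, ℓ', rfl⟩
    rw [List.pairwise_cons] at hsort
    have ha : a = 0 := by
      rcases List.mem_cons.1 h0mem with rfl | h0
      · rfl
      · exact absurd (hsort.1 0 h0) (by simp)
    subst ha
    have hpos : ∀ x ∈ ℓ', 0 < x := hsort.1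
    refine ⟨ℓ'.map (· - 1), LTy.abs hty hpos, ?_, ?_⟩
    · rw [List.pairwise_map]
      exact (hsort.2.imp_of_mem (fun {x y} hx hy hxy => by
        have := hpos x hx; omega))
    · rw [Multiset.coe_eq_coe]
      apply List.perm_iff_count.2
      intro k
      rw [hFIlam, count_filterMap, ← hcnt (k + 1),
        ← filterMap_eq_map_of_pos ℓ' hpos, count_filterMap]
      simp [List.count_cons]
  | app t1 t2 ih1 ih2 =>
    rintro ⟨h1, h2⟩ hnd
    have hFIapp : FI (Tm.app t1 t2) = FI t1 ++ FI t2 := rfl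
    rw [hFIapp, List.nodup_append] at hnd
    obtain ⟨hnd1, hnd2, hdisj⟩ := hnd
    obtain ⟨l1, hty1, hs1, hm1⟩ := ih1 h1 hnd1
    obtain ⟨l2, hty2, hs2, hm2⟩ := ih2 h2 hnd2
    have hdisj' : ∀ a ∈ l1, a ∉ l2 := by
      intro a ha hb
      have ha' : a ∈ FI t1 := by
        have : a ∈ (↑(FI t1) : Multiset ℕ) := hm1 ▸ (by simpa using ha)
        simpa using this
      have hb' : a ∈ FI t2 := by
        have : a ∈ (↑(FI t2) : Multiset ℕ) := hm2 ▸ (by simpa using hb)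
        simpa using this
      exact hdisj a ha' a hb' rfl
    obtain ⟨l, hm, hs, hmul⟩ := merge_complete l1 l2 hs1 hs2 hdisj'
    exact ⟨l, LTy.app hty1 hty2 hm, hs, by rw [hmul, hm1, hm2, hFIapp]; simp⟩

theorem LT_nil_iff_closed_linear (t : Tm) :
    LTy t [] ↔ (FI t = [] ∧ Linear t) := by
  constructor
  · intro h
    obtain ⟨hlin, hm⟩ := LTy_spec h
    exact ⟨by simpa using hm, hlin⟩
  · rintro ⟨hfi, hlin⟩
    obtain ⟨ℓ, hty, _, hm⟩ := LTy_of_linear t hlin (by simp [hfi])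
    have : ℓ = [] := by simpa [hfi] using hm
    exact this ▸ hty
end

section
/- In the L-type system for λυ with explicit substitutions, the rule B preserves L-types: if (λt₁) t₂ : ℓ is derivable, then t₁{t₂, 0} : ℓ is derivable with the same ℓ. -/
/-- λυ-terms with implicit names: indices, abstraction, application,
updater `t⇑ᵢ` and explicit substitution `t{t', i}`. -/
inductive TmU : Type
  | ind : ℕ → TmU
  | lam : TmU → TmU
  | app : TmU → TmU → TmU
  | upd : TmU → ℕ → TmU
  | sub : TmU → TmU → ℕ → TmU

/-- The L-type system for λυ. -/
inductive LTu : TmU → List ℕ → Prop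
  | ind (n : ℕ) : LTu (.ind n) [n]
  | abs {t ℓ} : LTu t (0 :: ℓ) → (∀ x ∈ ℓ, 0 < x) → LTu (.lam t) (ℓ.map (· - 1))
  | app {t₁ t₂ ℓ₁ ℓ₂ ℓ} : LTu t₁ ℓ₁ → LTu t₂ ℓ₂ → merge ℓ₁ ℓ₂ = some ℓ →
      LTu (.app t₁ t₂) ℓ
  | upd {t ℓ ℓ'} (i : ℕ) : LTu t ℓ →
      merge (ℓ.filter (fun x => decide (x < i)))
        ((ℓ.filter (fun x => decide (i ≤ x))).map (· + 1)) = some ℓ' →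
      LTu (.upd t i) ℓ'
  | subIn {t₁ t₂ ℓ₁ ℓ₂ m ℓ} (i : ℕ) : LTu t₁ ℓ₁ → LTu t₂ ℓ₂ → i ∈ ℓ₁ →
      merge (ℓ₁.filter (fun x => decide (x < i)))
        ((ℓ₁.filter (fun x => decide (i < x))).map (· - 1)) = some m →
      merge m (ℓ₂.map (· + i)) = some ℓ →
      LTu (.sub t₁ t₂ i) ℓ
  | subNotIn {t₁ t₂ ℓ₁ ℓ₂ ℓ} (i : ℕ) : LTu t₁ ℓ₁ → LTu t₂ ℓ₂ → i ∉ ℓ₁ →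
      merge (ℓ₁.filter (fun x => decide (x < i)))
        ((ℓ₁.filter (fun x => decide (i < x))).map (· - 1)) = some ℓ →
      LTu (.sub t₁ t₂ i) ℓ

theorem B_preserves_Ltype {t₁ t₂ : TmU} {ℓ : List ℕ}
    (h : LTu (.app (.lam t₁) t₂) ℓ) : LTu (.sub t₁ t₂ 0) ℓ := by
  cases h with
  | app h1 h2 hm =>
    cases h1 with
    | abs h0 hpos =>
      rename_i ℓb ℓa
      refine LTu.subIn (m := ℓa.map (· - 1)) 0 h0 h2 (by simp) ?_ ?_
      · have e1 : (0 :: ℓa).filter (fun x => decide (x < 0)) = [] := by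
          simp
        have e2 : (0 :: ℓa).filter (fun x => decide (0 < x)) = ℓa := by
          simp [List.filter_eq_self]
          exact hpos
        rw [e1, e2]
        simp [merge]
      · simpa using hm
end

section
/- The Lambda⇑ rule of λυ preserves L-types: for a strictly sorted list ℓ whose head position corresponds to a bound 0, (<i | ↓ℓ) ‡ ↑(≥i | ↓ℓ) = ↓((<i+1 | ℓ) ‡ ↑(≥i+1 | ℓ)), where ℓ is a strictly sorted list of strictly positive naturals. -/
lemma merge_all_lt (l₁ l₂ : List ℕ) (h : ∀ x ∈ l₁, ∀ y ∈ l₂, x < y) :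
    merge l₁ l₂ = some (l₁ ++ l₂) := by
  induction l₁ with
  | nil => simp [merge]
  | cons a l ih =>
    cases l₂ with
    | nil => simp [merge]
    | cons b m =>
      have hab : a < b := h a (by simp) b (by simp)
      have := ih (fun x hx y hy => h x (by simp [hx]) y hy)
      simp [merge, hab, this]

theorem lambda_upd_preserves (i : ℕ) (ℓ : List ℕ)
    (hs : ℓ.Pairwise (· < ·)) (hp : ∀ x ∈ ℓ, 0 < x) :
    ∃ L M,
      merge ((ℓ.map (· - 1)).filter (fun x => decide (x < i)))
        (((ℓ.map (· - 1)).filter (fun x => decide (i ≤ x))).map (· + 1)) = some L ∧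
      merge (ℓ.filter (fun x => decide (x < i + 1)))
        ((ℓ.filter (fun x => decide (i + 1 ≤ x))).map (· + 1)) = some M ∧
      L = M.map (· - 1) := by
  refine ⟨_, _, merge_all_lt _ _ ?_, merge_all_lt _ _ ?_, ?_⟩
  · intro x hx y hy
    simp only [List.mem_filter, List.mem_map, decide_eq_true_eq] at hx hy
    obtain ⟨z, hz, hzy⟩ := hy
    omega
  · intro x hx y hy
    simp only [List.mem_filter, List.mem_map, decide_eq_true_eq] at hx hy
    obtain ⟨z, ⟨hz, hzle⟩, rfl⟩ := hy
    omega
  · rw [List.map_append]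
    congr 1
    · rw [List.filter_map, List.filter_congr (l := ℓ)
        (q := fun x => decide (x < i + 1)) ?_]
      · intro x hx
        have := hp x hx
        simp only [Function.comp_apply, decide_eq_decide]
        omega
    · rw [List.map_map, List.filter_map, List.filter_congr (l := ℓ)
        (q := fun x => decide (i + 1 ≤ x)) ?_, List.map_map]
      · refine List.map_congr_left fun x hx => ?_
        have := hp x (List.mem_filter.mp hx).1
        simp only [Function.comp_apply]
        omega
      · intro x hx
        have := hp x hx
        simp only [Function.comp_apply, decide_eq_decide]
        omega
end

section
/- Every L-typeable term of the resource calculus Λ® is affine: if t : ℓ is derivable in the L-type system for Λ®, then no ®-index occurs twice in t. -/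
/-- ®-indices: a de Bruijn index together with a boolean string. -/
abbrev RIdx := ℕ × List Bool

/-- Lexicographic order on boolean strings (false = 0, true = 1). -/
inductive LtL : List Bool → List Bool → Prop
  | zero_one (ℓ : List Bool) : LtL (false :: ℓ) (true :: ℓ)
  | nil (b : Bool) (ℓ : List Bool) : LtL [] (b :: ℓ)
  | cons {ℓ₁ ℓ₂ : List Bool} (b : Bool) : LtL ℓ₁ ℓ₂ → LtL (b :: ℓ₁) (b :: ℓ₂)

/-- Lexicographic order on ®-indices: naturals first, then boolean strings. -/
inductive LtR : RIdx → RIdx → Prop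
  | fst {n₁ n₂ : ℕ} (α₁ α₂ : List Bool) : n₁ < n₂ → LtR (n₁, α₁) (n₂, α₂)
  | snd {α₁ α₂ : List Bool} (n : ℕ) : LtL α₁ α₂ → LtR (n, α₁) (n, α₂)

/-- The partial merge of sorted lists of ®-indices, as a relation
(it fails on equal elements). -/
inductive MergeR : List RIdx → List RIdx → List RIdx → Prop
  | nil (ℓ : List RIdx) : MergeR [] ℓ ℓ
  | nil' (x : RIdx) (ℓ : List RIdx) : MergeR (x :: ℓ) [] (x :: ℓ)
  | lt {x y : RIdx} {ℓ₁ ℓ₂ m : List RIdx} : LtR x y →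
      MergeR ℓ₁ (y :: ℓ₂) m → MergeR (x :: ℓ₁) (y :: ℓ₂) (x :: m)
  | gt {x y : RIdx} {ℓ₁ ℓ₂ m : List RIdx} : LtR y x →
      MergeR (x :: ℓ₁) ℓ₂ m → MergeR (x :: ℓ₁) (y :: ℓ₂) (y :: m)

/-- Decrement the first component of each ®-index of a list. -/
def down (ℓ : List RIdx) : List RIdx := ℓ.map (fun x => (x.1 - 1, x.2))

/-- Terms of the resource calculus Λ®. -/
inductive RTm : Type
  | ind : ℕ → List Bool → RTm
  | lam : RTm → RTm
  | app : RTm → RTm → RTm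
  | era : ℕ → List Bool → RTm → RTm
  | dup : ℕ → List Bool → RTm → RTm

/-- The L-type system for Λ®. -/
inductive LTr : RTm → List RIdx → Prop
  | ind (n : ℕ) (α : List Bool) : LTr (.ind n α) [(n, α)]
  | abs {t ℓ} : LTr t ((0, ([] : List Bool)) :: ℓ) → (∀ x ∈ ℓ, 0 < x.1) →
      LTr (.lam t) (down ℓ)
  | app {t₁ t₂ ℓ₁ ℓ₂ ℓ} : LTr t₁ ℓ₁ → LTr t₂ ℓ₂ → MergeR ℓ₁ ℓ₂ ℓ →
      LTr (.app t₁ t₂) ℓ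
  | era {t ℓ ℓ'} (n : ℕ) (α : List Bool) : LTr t ℓ → MergeR [(n, α)] ℓ ℓ' →
      LTr (.era n α t) ℓ'
  | dup {t ℓ ℓ' m} (n : ℕ) (α : List Bool) : LTr t ℓ' →
      MergeR ℓ [(n, α ++ [false]), (n, α ++ [true])] ℓ' →
      MergeR [(n, α)] ℓ m →
      LTr (.dup n α t) m

/-- The list of free ®-indices of a Λ®-term. -/
def FIr : RTm → List RIdx
  | .ind n α => [(n, α)]
  | .lam t => ((FIr t).filter (fun x => decide (x.1 ≠ 0))).map (fun x => (x.1 - 1, x.2))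
  | .app t₁ t₂ => FIr t₁ ++ FIr t₂
  | .era n α t => (n, α) :: FIr t
  | .dup n α t => (n, α) :: (((FIr t).erase (n, α ++ [false])).erase (n, α ++ [true]))

/-- A genuine (transitive, irreflexive) lexicographic order into which `LtR` embeds. -/
def lexLt (x y : RIdx) : Prop :=
  x.1 < y.1 ∨ (x.1 = y.1 ∧ List.Lex (· < ·) x.2 y.2)

theorem lexLt_trans {x y z : RIdx} (h₁ : lexLt x y) (h₂ : lexLt y z) : lexLt x z := by
  rcases h₁ with h₁ | ⟨e₁, h₁⟩ <;> rcases h₂ with h₂ | ⟨e₂, h₂⟩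
  · exact Or.inl (h₁.trans h₂)
  · exact Or.inl (e₂ ▸ h₁)
  · exact Or.inl (e₁ ▸ h₂)
  · exact Or.inr ⟨e₁.trans e₂, List.lt_trans h₁ h₂⟩

theorem lexLt_irrefl (x : RIdx) : ¬ lexLt x x := by
  rintro (h | ⟨-, h⟩)
  · exact lt_irrefl _ h
  · exact irrefl _ h

theorem LtL_lex {α β : List Bool} (h : LtL α β) : List.Lex (· < ·) α β := by
  induction h with
  | zero_one ℓ => exact List.Lex.rel (by decide)
  | nil b ℓ => exact List.Lex.nil
  | cons b h ih => exact List.Lex.cons ih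

theorem LtR_lexLt {x y : RIdx} (h : LtR x y) : lexLt x y := by
  cases h with
  | fst _ _ h => exact Or.inl h
  | snd _ h => exact Or.inr ⟨rfl, LtL_lex h⟩

/-- A merge is a permutation of the concatenation. -/
theorem MergeR.perm {ℓ₁ ℓ₂ m : List RIdx} (h : MergeR ℓ₁ ℓ₂ m) : m.Perm (ℓ₁ ++ ℓ₂) := by
  induction h with
  | nil ℓ => exact List.Perm.refl _
  | nil' x ℓ => simp
  | lt _ _ ih => exact ih.cons _
  | gt _ _ ih =>
    exact ((ih.cons _).trans (List.perm_middle (l₁ := _ :: _)).symm)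

theorem MergeR.sublist_left {ℓ₁ ℓ₂ m : List RIdx} (h : MergeR ℓ₁ ℓ₂ m) : ℓ₁.Sublist m := by
  induction h with
  | nil ℓ => exact List.nil_sublist _
  | nil' x ℓ => exact List.Sublist.refl _
  | lt _ _ ih => exact ih.cons₂ _
  | gt _ _ ih => exact ih.cons _

/-- Merging preserves sortedness w.r.t. `lexLt`. -/
theorem MergeR.pairwise {ℓ₁ ℓ₂ m : List RIdx} (h : MergeR ℓ₁ ℓ₂ m)
    (h₁ : ℓ₁.Pairwise lexLt) (h₂ : ℓ₂.Pairwise lexLt) : m.Pairwise lexLt := by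
  induction h with
  | nil ℓ => exact h₂
  | nil' x ℓ => exact h₁
  | @lt x y ℓ₁ ℓ₂ m hxy hm ih =>
    rcases h₁ with _ | ⟨hx, h₁⟩
    refine List.Pairwise.cons ?_ (ih h₁ h₂)
    intro z hz
    have hz' : z ∈ ℓ₁ ++ y :: ℓ₂ := hm.perm.mem_iff.mp hz
    rcases List.mem_append.mp hz' with hz' | hz'
    · exact hx _ hz'
    · rcases List.mem_cons.mp hz' with rfl | hz'
      · exact LtR_lexLt hxy
      · rcases h₂ with _ | ⟨hy, h₂⟩
        exact lexLt_trans (LtR_lexLt hxy) (hy _ hz')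
  | @gt x y ℓ₁ ℓ₂ m hyx hm ih =>
    rcases h₂ with _ | ⟨hy, h₂⟩
    refine List.Pairwise.cons ?_ (ih h₁ h₂)
    intro z hz
    have hz' : z ∈ (x :: ℓ₁) ++ ℓ₂ := hm.perm.mem_iff.mp hz
    rcases List.mem_append.mp hz' with hz' | hz'
    · rcases List.mem_cons.mp hz' with rfl | hz'
      · exact LtR_lexLt hyx
      · rcases h₁ with _ | ⟨hx, h₁⟩
        exact lexLt_trans (LtR_lexLt hyx) (hx _ hz')
    · exact hy _ hz'

/-- Typing lists are sorted w.r.t. `lexLt`. -/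
theorem LTr.pairwise {t : RTm} {ℓ : List RIdx} (h : LTr t ℓ) : ℓ.Pairwise lexLt := by
  induction h with
  | ind n α => simp
  | @abs t ℓ _ hp ih =>
    rcases ih with _ | ⟨-, ih⟩
    unfold down
    rw [List.pairwise_map]
    refine ih.imp_of_mem ?_
    intro a b ha hb hab
    have h1 := hp a ha
    have h2 := hp b hb
    rcases hab with hab | ⟨e, hab⟩
    · exact Or.inl (by omega)
    · exact Or.inr ⟨by omega, hab⟩
  | app h₁ h₂ hm ih₁ ih₂ => exact hm.pairwise ih₁ ih₂
  | era n α h hm ih => exact hm.pairwise (by simp) ih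
  | dup n α h hm₁ hm₂ ih =>
    exact hm₂.pairwise (by simp) (ih.sublist hm₁.sublist_left)

theorem beqRIdx : (instBEqOfDecidableEq : BEq RIdx) = instBEqProd := by
  have h : (instBEqOfDecidableEq : BEq RIdx).beq = (instBEqProd : BEq RIdx).beq := by
    funext x y
    rw [Bool.eq_iff_iff]
    simp [instBEqOfDecidableEq, beq_iff_eq]
  have key : ∀ (i j : BEq RIdx), i.beq = j.beq → i = j := by
    rintro ⟨f⟩ ⟨g⟩ rfl; rfl
  exact key _ _ h

theorem perm_eraseR {l₁ l₂ : List RIdx} (a : RIdx) (h : l₁.Perm l₂) :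
    (l₁.erase a).Perm (l₂.erase a) := by
  have h2 := List.Perm.erase (l₁ := l₁) (l₂ := l₂) a h
  exact h2

/-- The free indices of a typed term are a permutation of its typing list. -/
theorem LTr.perm {t : RTm} {ℓ : List RIdx} (h : LTr t ℓ) : (FIr t).Perm ℓ := by
  induction h with
  | ind n α => exact List.Perm.refl _
  | @abs t ℓ _ hp ih =>
    show (((FIr t).filter _).map _).Perm (down ℓ)
    unfold down
    refine List.Perm.map _ ?_
    have h1 : ((0, ([] : List Bool)) :: ℓ).filter (fun x => decide (x.1 ≠ 0)) = ℓ := by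
      rw [List.filter_cons_of_neg (by simp)]
      rw [List.filter_eq_self]
      intro a ha
      have := hp a ha; simp; omega
    exact h1 ▸ ih.filter _
  | app h₁ h₂ hm ih₁ ih₂ =>
    exact ((ih₁.append ih₂).trans hm.perm.symm)
  | era n α h hm ih =>
    exact ((ih.cons _).trans hm.perm.symm)
  | @dup t ℓ ℓ' m n α h hm₁ hm₂ ih =>
    show ((n, α) :: _).Perm m
    refine List.Perm.trans (List.Perm.cons _ ?_) hm₂.perm.symm
    have p1 : ℓ'.Perm ((n, α ++ [false]) :: (ℓ ++ [(n, α ++ [true])])) :=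
      hm₁.perm.trans (List.perm_middle (l₂ := [(n, α ++ [true])]))
    have e1 : ((FIr t).erase (n, α ++ [false])).Perm (ℓ ++ [(n, α ++ [true])]) := by
      have h2 := perm_eraseR (n, α ++ [false]) (ih.trans p1)
      rwa [List.erase_cons_head] at h2
    have p2 : (ℓ ++ [(n, α ++ [true])]).Perm ((n, α ++ [true]) :: ℓ) := by
      have h4 := List.perm_middle (l₂ := ([] : List RIdx)) (l₁ := ℓ) (a := (n, α ++ [true]))
      rwa [List.append_nil] at h4
    have h3 := perm_eraseR (n, α ++ [true]) (e1.trans p2)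
    rwa [List.erase_cons_head] at h3

theorem LTr_affine {t : RTm} {ℓ : List RIdx} (h : LTr t ℓ) : (FIr t).Nodup := by
  have hp := h.pairwise
  have hn : ℓ.Nodup := hp.imp_of_mem (fun _ _ hl he => lexLt_irrefl _ (he ▸ hl))
  exact h.perm.nodup_iff.mpr hn
end

section
/- In Λ®, the rule (λ-⊙) preserves L-types: if λ((n+1,α)⊙t) : ℓ is derivable then (n,α)⊙(λt) : ℓ is derivable. Concretely, for a list ℓ of ®-indices starting with (0,ε) followed by indices with positive first components: [(n,α)] ‡ ↓(tail part) = ↓([(n+1,α)] ‡ tail part) appropriately, i.e., ↓([( n+1,α)] ‡ ℓ') = [(n,α)] ‡ ↓ℓ' for ℓ' a sorted list of ®-indices with positive first components disjoint from (n+1,α). -/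
theorem lam_era_preserves (n : ℕ) (α : List Bool) (ℓ' m : List RIdx)
    (hs : ℓ'.Pairwise LtR) (hp : ∀ x ∈ ℓ', 1 ≤ x.1) (hd : (n + 1, α) ∉ ℓ')
    (h : MergeR [(n + 1, α)] ℓ' m) :
    MergeR [(n, α)] (down ℓ') (down m) := by
  induction ℓ' generalizing m with
  | nil =>
    cases h
    simpa [down] using MergeR.nil' (n, α) []
  | cons y t ih =>
    obtain ⟨y1, y2⟩ := y
    have hy1 : 1 ≤ y1 := hp (y1, y2) List.mem_cons_self
    cases h with
    | lt hxy h2 =>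
      cases h2
      simp only [down, List.map_cons, Nat.add_sub_cancel]
      refine MergeR.lt ?_ (MergeR.nil _)
      cases hxy with
      | fst _ _ hlt => exact LtR.fst _ _ (by omega)
      | snd _ hl => simpa using LtR.snd _ hl
    | gt hyx h2 =>
      simp only [down, List.map_cons, Nat.add_sub_cancel] at *
      refine MergeR.gt ?_ ?_
      · cases hyx with
        | fst _ _ hlt => exact LtR.fst _ _ (by omega)
        | snd _ hl => simpa using LtR.snd _ hl
      · exact ih _ hs.of_cons (fun x hx => hp x (List.mem_cons_of_mem _ hx))
          (fun hx => hd (List.mem_cons_of_mem _ hx)) h2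
end

section
/- In the L-type system for Λ®, the rule (▽-λ) preserves L-types: if (n,α)▽(λt) : ℓ is derivable then λ((n+1,α)▽t) : ℓ is derivable. Concretely, for the underlying list identity: if ℓ is a <®-sorted list with all first components positive, disjoint from {(n+1,α0),(n+1,α1),(n+1,α)} as appropriate, then [(n,α)] ‡ ↓ℓ = ↓([(n+1,α)] ‡ ℓ). -/
lemma ltR_down_right {n : ℕ} {α : List Bool} {y : RIdx} (h : LtR (n + 1, α) y) :
    LtR (n, α) (y.1 - 1, y.2) := by
  cases h with
  | fst _ _ h => exact LtR.fst _ _ (by omega)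
  | snd _ h => exact LtR.snd _ h

lemma ltR_down_left {n : ℕ} {α : List Bool} {y : RIdx} (h : LtR y (n + 1, α))
    (hy : 0 < y.1) : LtR (y.1 - 1, y.2) (n, α) := by
  cases h with
  | fst _ _ h => exact LtR.fst _ _ (by omega)
  | snd _ h => exact LtR.snd _ h

lemma merge_down_aux (n : ℕ) (α : List Bool) :
    ∀ (ℓ m : List RIdx), (∀ x ∈ ℓ, 0 < x.1) → MergeR [(n + 1, α)] ℓ m →
    MergeR [(n, α)] (down ℓ) (down m)
  | [], _, _, h => by
    cases h
    exact MergeR.nil' _ _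
  | (y :: ℓ'), m, hp, h => by
    cases h with
    | lt h1 h2 =>
      cases h2
      exact MergeR.lt (ltR_down_right h1) (MergeR.nil _)
    | gt h1 h2 =>
      exact MergeR.gt (ltR_down_left h1 (hp y (by simp))) 
        (merge_down_aux n α ℓ' _ (fun x hx => hp x (by simp [hx])) h2)

theorem dup_lam_preserves (n : ℕ) (α : List Bool) (ℓ m : List RIdx)
    (hs : ℓ.Pairwise LtR) (hp : ∀ x ∈ ℓ, 0 < x.1)
    (hd : (n + 1, α ++ [false]) ∉ ℓ ∧ (n + 1, α ++ [true]) ∉ ℓ ∧ (n + 1, α) ∉ ℓ)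
    (h : MergeR [(n + 1, α)] ℓ m) :
    MergeR [(n, α)] (down ℓ) (down m) := merge_down_aux n α ℓ m hp h
end
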